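/- For integers n and a necklace (T,p), the degree-n component of the dg complex of T is free on injective necklace maps into T of dimension n, i.e. dg(T)_n ≅ ⊕_{g: U ↪ T injective, dim(U)=n} k·g, and with the differential ∂_n(g) = Σ_{j=1}^n (-1)^{j-1} (g∘δ_{i_j} − g∘ν_{i_j, q−i_j}) (where U^c = {i_1 < ... < i_n}), one has ∂_{n-1} ∘ ∂_n = 0, i.e. (dg(T)_•, ∂) is a chain complex of k-modules. -/

import Mathlib

def IsNeck (p : ℕ) (T : Finset ℕ) : Prop :=
  T ⊆ Finset.range (p + 1) ∧ 0 ∈ T ∧ p ∈ T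

/-- An injective necklace map `g : (U,q) ↪ (T,p)` of dimension `n`, encoded by
its image data: `V = g([q])` is the image of the vertices and `W = g(U)` the
image of the joints; then `T ⊆ W ⊆ V ⊆ [p]`, `0, p ∈ W`, and
`dim U = |V \ W| = n`.  (The strictly monotone endpoint-preserving map `g` is
recovered as the unique order isomorphism `[q] ≅ V`, and `U = g⁻¹(W)`.) -/
structure Idx (p : ℕ) (T : Finset ℕ) (n : ℕ) : Type where
  V : Finset ℕ
  W : Finset ℕ
  hTW : T ⊆ W
  hWV : W ⊆ V
  hV : V ⊆ Finset.range (p + 1)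
  h0 : 0 ∈ W
  hp : p ∈ W
  hdim : (V \ W).card = n

namespace Idx

variable {p : ℕ} {T : Finset ℕ} {n : ℕ}

/-- The face `g ∘ δ_{i_j}` of an injective necklace map, removing the vertex
`i ∈ V \ W`. -/
def face (x : Idx p T (n + 1)) (i : ℕ) (hi : i ∈ x.V \ x.W) : Idx p T n where
  V := x.V.erase i
  W := x.W
  hTW := x.hTW
  hWV := Finset.subset_erase.mpr ⟨x.hWV, (Finset.mem_sdiff.mp hi).2⟩
  hV := fun a ha => x.hV (Finset.mem_of_mem_erase ha)
  h0 := x.h0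
  hp := x.hp
  hdim := by
    have h1 : x.V.erase i \ x.W = (x.V \ x.W).erase i := by
      ext a
      simp only [Finset.mem_erase, Finset.mem_sdiff]
      tauto
    rw [h1, Finset.card_erase_of_mem hi, x.hdim]
    omega

/-- The inert restriction `g ∘ ν` of an injective necklace map, adding the
vertex `i ∈ V \ W` as a joint. -/
def inert (x : Idx p T (n + 1)) (i : ℕ) (hi : i ∈ x.V \ x.W) : Idx p T n where
  V := x.V
  W := insert i x.W
  hTW := x.hTW.trans (Finset.subset_insert _ _)
  hWV := Finset.insert_subset_iff.mpr ⟨(Finset.mem_sdiff.mp hi).1, x.hWV⟩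
  hV := x.hV
  h0 := Finset.mem_insert_of_mem x.h0
  hp := Finset.mem_insert_of_mem x.hp
  hdim := by
    have h1 : x.V \ insert i x.W = (x.V \ x.W).erase i := by
      ext a
      simp only [Finset.mem_erase, Finset.mem_sdiff, Finset.mem_insert]
      tauto
    rw [h1, Finset.card_erase_of_mem hi, x.hdim]
    omega

end Idx

/-- The boundary of a generator: `∂(g) = Σ_{j=1}^{n+1} (-1)^{j-1}
(g ∘ δ_{i_j} - g ∘ ν_{i_j, q - i_j})`, the sum running over the complement
`V \ W = {i_1 < i_2 < …}`. -/
noncomputable def bnd (k : Type*) [CommRing k] {p : ℕ} {T : Finset ℕ} {n : ℕ}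
    (x : Idx p T (n + 1)) : Idx p T n →₀ k :=
  ∑ i ∈ (x.V \ x.W).attach,
    ((-1 : k) ^ ((x.V \ x.W).filter (fun y => y < (i : ℕ))).card) •
      (Finsupp.single (x.face i.1 i.2) (1 : k) -
        Finsupp.single (x.inert i.1 i.2) (1 : k))

/-- The differential `∂ : dg(T)_{n+1} → dg(T)_n` of the dg complex of the
necklace `(T,p)`, where `dg(T)_m` is the free `k`-module on injective necklace
maps into `T` of dimension `m`. -/
noncomputable def Dmap (k : Type*) [CommRing k] (p : ℕ) (T : Finset ℕ) (n : ℕ) :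
    (Idx p T (n + 1) →₀ k) →ₗ[k] (Idx p T n →₀ k) :=
  Finsupp.lsum k fun x => LinearMap.toSpanSingleton k _ (bnd k x)

/-!
Freeness is the standard basis of `Idx p T n →₀ k`. For `∂ ∂ = 0`, expand `∂ ∂ g` as a sum over
ordered pairs `(i, j)` of distinct gaps of `g` (elements of `V \ W`), each of which is removed
by a face `δ` or turned into a joint by an inert map `ν`. These operations commute
(`δδ = δδ`, `δν = νδ`, `νν = νν`), so the terms for `(i, j)` and `(j, i)` agree up to sign; the
signs are opposite because removing the smaller of `i < j` lowers the position of `j` among the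
gaps by one. Hence the involution `(i, j) ↦ (j, i)` cancels the sum in pairs.
-/

section SignBelow

variable {α : Type*} [LinearOrder α]

lemma Finset.card_filter_lt_erase_add_one {s : Finset α} {i j : α} (hi : i ∈ s) (hij : i < j) :
    ((s.erase i).filter (· < j)).card + 1 = (s.filter (· < j)).card := by
  rw [Finset.filter_erase, Finset.card_erase_add_one (Finset.mem_filter.mpr ⟨hi, hij⟩)]

lemma Finset.filter_lt_erase_of_lt {s : Finset α} {i j : α} (hij : i < j) :
    (s.erase j).filter (· < i) = s.filter (· < i) := by
  rw [Finset.filter_erase,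
    Finset.erase_eq_of_notMem (by simpa using fun _ => hij.le)]

variable (R : Type*) [Monoid R] [HasDistribNeg R]

/-- `(-1) ^ (j - 1)` for the `j`-th smallest element `i` of `s`. -/
def signBelow (s : Finset α) (i : α) : R :=
  (-1 : R) ^ (s.filter (· < i)).card

variable {R}

lemma signBelow_mul_signBelow_erase_of_lt {s : Finset α} {i j : α} (hi : i ∈ s) (hij : i < j) :
    signBelow R s i * signBelow R (s.erase i) j =
      -(signBelow R s j * signBelow R (s.erase j) i) := by
  rw [signBelow, signBelow, signBelow, signBelow, Finset.filter_lt_erase_of_lt hij,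
    ← Finset.card_filter_lt_erase_add_one hi hij, pow_succ, mul_neg_one, neg_mul, neg_neg, ← pow_add,
    ← pow_add, add_comm]

lemma signBelow_mul_signBelow_erase_of_ne {s : Finset α} {i j : α} (hi : i ∈ s) (hj : j ∈ s)
    (hij : i ≠ j) :
    signBelow R s i * signBelow R (s.erase i) j =
      -(signBelow R s j * signBelow R (s.erase j) i) := by
  rcases hij.lt_or_gt with h | h
  · exact signBelow_mul_signBelow_erase_of_lt hi h
  · rw [signBelow_mul_signBelow_erase_of_lt hj h, neg_neg]

end SignBelow

lemma Finset.sum_offDiag_eq_zero_of_antisymm {ι M : Type*} [DecidableEq ι] [AddCommGroup M]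
    (s : Finset ι) (t : ι → ι → M) (ht : ∀ i ∈ s, ∀ j ∈ s, i ≠ j → t i j = -t j i) :
    ∑ x ∈ s.offDiag, t x.1 x.2 = 0 := by
  refine Finset.sum_involution (fun x _ => x.swap) (fun x hx => ?_) (fun x hx _ => ?_)
    (fun x hx => ?_) (fun x _ => rfl)
  · obtain ⟨hi, hj, hij⟩ := Finset.mem_offDiag.mp hx
    rw [ht _ hi _ hj hij, Prod.fst_swap, Prod.snd_swap, neg_add_cancel]
  · obtain ⟨-, -, hij⟩ := Finset.mem_offDiag.mp hx
    exact fun h => hij (congrArg Prod.fst h).symm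
  · obtain ⟨hi, hj, hij⟩ := Finset.mem_offDiag.mp hx
    exact Finset.mem_offDiag.mpr ⟨hj, hi, hij.symm⟩

lemma Finset.sum_sum_erase_eq_sum_offDiag {ι M : Type*} [DecidableEq ι] [AddCommMonoid M]
    (s : Finset ι) (t : ι → ι → M) :
    ∑ i ∈ s, ∑ j ∈ s.erase i, t i j = ∑ x ∈ s.offDiag, t x.1 x.2 := by
  rw [show s.offDiag = {x ∈ s ×ˢ s | x.1 ≠ x.2} by ext; simp [and_assoc],
    Finset.sum_filter, Finset.sum_product]
  refine Finset.sum_congr rfl fun i _ => ?_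
  rw [← Finset.sum_filter, Finset.filter_ne]

namespace Idx

variable {k : Type*} [CommRing k] {p : ℕ} {T : Finset ℕ} {n : ℕ}

@[ext]
lemma ext {x y : Idx p T n} (hV : x.V = y.V) (hW : x.W = y.W) : x = y := by
  cases x; cases y; cases hV; cases hW; rfl

lemma face_V_sdiff_W (x : Idx p T (n + 1)) (i : ℕ) (hi : i ∈ x.V \ x.W) :
    (x.face i hi).V \ (x.face i hi).W = (x.V \ x.W).erase i := by
  ext a
  simp only [face, Finset.mem_sdiff, Finset.mem_erase]
  tauto

lemma inert_V_sdiff_W (x : Idx p T (n + 1)) (i : ℕ) (hi : i ∈ x.V \ x.W) :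
    (x.inert i hi).V \ (x.inert i hi).W = (x.V \ x.W).erase i := by
  ext a
  simp only [inert, Finset.mem_sdiff, Finset.mem_erase, Finset.mem_insert]
  tauto

lemma face_face (x : Idx p T (n + 2)) {i j : ℕ} (hi : i ∈ x.V \ x.W) (hj : j ∈ x.V \ x.W)
    (hj' : j ∈ (x.face i hi).V \ (x.face i hi).W) (hi' : i ∈ (x.face j hj).V \ (x.face j hj).W) :
    (x.face i hi).face j hj' = (x.face j hj).face i hi' :=
  Idx.ext Finset.erase_right_comm rfl

lemma face_inert (x : Idx p T (n + 2)) {i j : ℕ} (hi : i ∈ x.V \ x.W) (hj : j ∈ x.V \ x.W)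
    (hj' : j ∈ (x.face i hi).V \ (x.face i hi).W) (hi' : i ∈ (x.inert j hj).V \ (x.inert j hj).W) :
    (x.face i hi).inert j hj' = (x.inert j hj).face i hi' :=
  Idx.ext rfl rfl

lemma inert_inert (x : Idx p T (n + 2)) {i j : ℕ} (hi : i ∈ x.V \ x.W) (hj : j ∈ x.V \ x.W)
    (hj' : j ∈ (x.inert i hi).V \ (x.inert i hi).W)
    (hi' : i ∈ (x.inert j hj).V \ (x.inert j hj).W) :
    (x.inert i hi).inert j hj' = (x.inert j hj).inert i hi' :=
  Idx.ext rfl (Finset.insert_comm _ _ _)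

variable (k) in
/-- The summand `g ∘ δ_i - g ∘ ν_i` of `bnd`, extended by `0` to `i ∉ V \ W`. -/
noncomputable def bndTerm (x : Idx p T (n + 1)) (i : ℕ) : Idx p T n →₀ k :=
  if h : i ∈ x.V \ x.W then
    Finsupp.single (x.face i h) 1 - Finsupp.single (x.inert i h) 1
  else 0

variable (k) in
/-- The summand of `∂ ∂ x` indexed by removing first `i`, then `j`. -/
noncomputable def bndTerm₂ (x : Idx p T (n + 2)) (i j : ℕ) : Idx p T n →₀ k :=
  if h : i ∈ x.V \ x.W then (x.face i h).bndTerm k j - (x.inert i h).bndTerm k j else 0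

/-- The cubical identities `δδ = δδ`, `δν = νδ`, `νν = νν` make the second-order terms
symmetric. -/
lemma bndTerm₂_comm (x : Idx p T (n + 2)) {i j : ℕ} (hi : i ∈ x.V \ x.W) (hj : j ∈ x.V \ x.W)
    (hij : i ≠ j) : x.bndTerm₂ k i j = x.bndTerm₂ k j i := by
  have hj₁ : j ∈ (x.face i hi).V \ (x.face i hi).W := by
    rw [face_V_sdiff_W]; exact Finset.mem_erase.mpr ⟨hij.symm, hj⟩
  have hj₂ : j ∈ (x.inert i hi).V \ (x.inert i hi).W := by
    rw [inert_V_sdiff_W]; exact Finset.mem_erase.mpr ⟨hij.symm, hj⟩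
  have hi₁ : i ∈ (x.face j hj).V \ (x.face j hj).W := by
    rw [face_V_sdiff_W]; exact Finset.mem_erase.mpr ⟨hij, hi⟩
  have hi₂ : i ∈ (x.inert j hj).V \ (x.inert j hj).W := by
    rw [inert_V_sdiff_W]; exact Finset.mem_erase.mpr ⟨hij, hi⟩
  rw [bndTerm₂, bndTerm₂, dif_pos hi, dif_pos hj, bndTerm, bndTerm, bndTerm, bndTerm,
    dif_pos hj₁, dif_pos hj₂, dif_pos hi₁, dif_pos hi₂, face_face x hi hj hj₁ hi₁,
    face_inert x hi hj hj₁ hi₂, face_inert x hj hi hi₁ hj₂, inert_inert x hi hj hj₂ hi₂]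
  abel

end Idx

section Differential

variable {k : Type*} [CommRing k] {p : ℕ} {T : Finset ℕ} {n : ℕ}

lemma bnd_eq_sum_bndTerm (x : Idx p T (n + 1)) :
    bnd k x = ∑ i ∈ x.V \ x.W, signBelow k (x.V \ x.W) i • x.bndTerm k i := by
  rw [bnd, ← Finset.sum_attach (x.V \ x.W)]
  refine Finset.sum_congr rfl fun i _ => ?_
  rw [Idx.bndTerm, dif_pos i.2, signBelow]

lemma Dmap_single (x : Idx p T (n + 1)) (c : k) :
    Dmap k p T n (Finsupp.single x c) = c • bnd k x := by
  simp [Dmap]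

lemma Dmap_bndTerm (x : Idx p T (n + 2)) {i : ℕ} (hi : i ∈ x.V \ x.W) :
    Dmap k p T n (x.bndTerm k i) =
      ∑ j ∈ (x.V \ x.W).erase i, signBelow k ((x.V \ x.W).erase i) j • x.bndTerm₂ k i j := by
  rw [Idx.bndTerm, dif_pos hi, map_sub, Dmap_single, Dmap_single, one_smul, one_smul,
    bnd_eq_sum_bndTerm, bnd_eq_sum_bndTerm, Idx.face_V_sdiff_W, Idx.inert_V_sdiff_W,
    ← Finset.sum_sub_distrib]
  simp only [Idx.bndTerm₂, dif_pos hi, smul_sub]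

lemma Dmap_bnd (x : Idx p T (n + 2)) : Dmap k p T n (bnd k x) = 0 := by
  let t (i j : ℕ) : Idx p T n →₀ k :=
    (signBelow k (x.V \ x.W) i * signBelow k ((x.V \ x.W).erase i) j) • x.bndTerm₂ k i j
  calc Dmap k p T n (bnd k x)
      = ∑ i ∈ x.V \ x.W, ∑ j ∈ (x.V \ x.W).erase i, t i j := by
        rw [bnd_eq_sum_bndTerm, map_sum]
        refine Finset.sum_congr rfl fun i hi => ?_
        simp only [t, map_smul, Dmap_bndTerm x hi, Finset.smul_sum, smul_smul]
    _ = 0 := by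
        rw [Finset.sum_sum_erase_eq_sum_offDiag]
        refine Finset.sum_offDiag_eq_zero_of_antisymm _ t fun i hi j hj hij => ?_
        simp only [t]
        rw [signBelow_mul_signBelow_erase_of_ne hi hj hij, Idx.bndTerm₂_comm x hi hj hij,
          neg_smul]

end Differential

theorem dg_is_chain_complex_general
    (k : Type*) [CommRing k] (p : ℕ) (T : Finset ℕ) :
    (∀ n : ℕ, Nonempty (Module.Basis (Idx p T n) k (Idx p T n →₀ k))) ∧
    (∀ (n : ℕ) (x : Idx p T (n + 2) →₀ k),
      Dmap k p T n (Dmap k p T (n + 1) x) = 0) := by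
  refine ⟨fun n => ⟨Finsupp.basisSingleOne⟩, fun n x => ?_⟩
  induction x using Finsupp.induction_linear with
  | zero => simp only [map_zero]
  | add f g hf hg => rw [map_add, map_add, hf, hg, add_zero]
  | single x c => rw [Dmap_single, map_smul, Dmap_bnd, smul_zero]

/-- The dg complex of a necklace: `dg(T)_n` is free on the injective necklace
maps `g : U ↪ T` with `dim U = n`, with differential
`∂(g) = Σ_{j=1}^n (-1)^{j-1}(g ∘ δ_{i_j} - g ∘ ν_{i_j,q-i_j})`, and
`∂ ∘ ∂ = 0`, i.e. `(dg(T)_•, ∂)` is a chain complex of `k`-modules. -/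
theorem dg_is_chain_complex
    (k : Type*) [CommRing k] (p : ℕ) (T : Finset ℕ) (hT : IsNeck p T) :
    (∀ n : ℕ, Nonempty (Module.Basis (Idx p T n) k (Idx p T n →₀ k))) ∧
    (∀ (n : ℕ) (x : Idx p T (n + 2) →₀ k),
      Dmap k p T n (Dmap k p T (n + 1) x) = 0) :=
  dg_is_chain_complex_general k p T
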